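/- arXiv:2208.00354 — 9 statements merged into one kernel-verified Lean document; each statement's English description precedes it below -/
import Mathlib

section
/- The closure of the truncated moment cone is the dual of the nonnegative polynomial cone: for a finite power set A ⊆ ℕ^n and closed K ⊆ ℝ^n, cl(R_A(K)) = P_A(K)*, i.e., y lies in the closure of the set of A-truncated moment sequences of Borel measures supported in K if and only if ⟨p, y⟩ ≥ 0 for every p ∈ ℝ[x]_A nonnegative on K. -/
/-! The dual set is closed and, since a polynomial nonnegative on `K` integrates to a nonnegative
number against any measure carried by `K`, it contains the moment cone; hence it contains its
closure. Conversely, the moment cone is a convex cone, so a point `y` outside its closure is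
separated from it by a linear functional `f` with `f ≥ 0` on the cone and `f y < 0` (Farkas).
Writing `f = ⟨c, ·⟩`, positivity of `f` on the moment vectors of the Dirac masses `δ_x`, `x ∈ K`,
says exactly that the polynomial with coefficients `c` is nonnegative on `K`, so `y` is not in
the dual set. -/

open MeasureTheory Finset

/-- The monomial `x^α` for an exponent vector `α : Fin n → ℕ`. -/
noncomputable def mono {n : ℕ} (α : Fin n → ℕ) (x : Fin n → ℝ) : ℝ := ∏ i, x i ^ α i

/-- The polynomial with coefficient vector `c` supported on the finite power set `A`. -/
noncomputable def polyA {n : ℕ} (A : Finset (Fin n → ℕ)) (c : A → ℝ) (x : Fin n → ℝ) : ℝ :=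
  ∑ α : A, c α * mono (α : Fin n → ℕ) x

/-- The truncated moment cone `R_A(K)`: those `y ∈ ℝ^A` admitting a positive Borel
representing measure supported in `K`. -/
def momCone {n : ℕ} (A : Finset (Fin n → ℕ)) (K : Set (Fin n → ℝ)) : Set (A → ℝ) :=
  {y | ∃ μ : Measure (Fin n → ℝ), μ Kᶜ = 0 ∧
      (∀ α : A, Integrable (mono (α : Fin n → ℕ)) μ) ∧
      (∀ α : A, y α = ∫ x, mono (α : Fin n → ℕ) x ∂μ)}

lemma integral_polyA {n : ℕ} {A : Finset (Fin n → ℕ)} {μ : Measure (Fin n → ℝ)}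
    (hμ : ∀ α : A, Integrable (mono (α : Fin n → ℕ)) μ) (c : A → ℝ) :
    ∫ x, polyA A c x ∂μ = ∑ α : A, c α * ∫ x, mono (α : Fin n → ℕ) x ∂μ := by
  simp only [polyA]
  rw [integral_finsetSum _ fun α _ => (hμ α).const_mul (c α)]
  simp only [integral_const_mul]

section momCone

variable {n : ℕ} {A : Finset (Fin n → ℕ)} {K : Set (Fin n → ℝ)}

lemma zero_mem_momCone : (0 : A → ℝ) ∈ momCone A K :=
  ⟨0, rfl, fun _ => integrable_zero_measure, fun _ => by simp⟩

lemma add_mem_momCone {y z : A → ℝ} (hy : y ∈ momCone A K) (hz : z ∈ momCone A K) :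
    y + z ∈ momCone A K := by
  obtain ⟨μ, hμK, hμ, hy⟩ := hy
  obtain ⟨ν, hνK, hν, hz⟩ := hz
  refine ⟨μ + ν, by simp [hμK, hνK], fun α => (hμ α).add_measure (hν α), fun α => ?_⟩
  rw [integral_add_measure (hμ α) (hν α), Pi.add_apply, hy α, hz α]

lemma smul_mem_momCone {t : ℝ} (ht : 0 ≤ t) {y : A → ℝ} (hy : y ∈ momCone A K) :
    t • y ∈ momCone A K := by
  obtain ⟨μ, hμK, hμ, hy⟩ := hy
  refine ⟨ENNReal.ofReal t • μ, by simp [hμK], fun α =>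
    (hμ α).smul_measure ENNReal.ofReal_ne_top, fun α => ?_⟩
  rw [integral_smul_measure, ENNReal.toReal_ofReal ht, Pi.smul_apply, hy α, smul_eq_mul]

variable (A K) in
def momPointedCone : PointedCone ℝ (A → ℝ) where
  carrier := momCone A K
  add_mem' := add_mem_momCone
  zero_mem' := zero_mem_momCone
  smul_mem' t _ hy := smul_mem_momCone t.2 hy

lemma moments_dirac_mem_momCone {x : Fin n → ℝ} (hx : x ∈ K) :
    (fun α : A => mono (α : Fin n → ℕ) x) ∈ momCone A K :=
  ⟨Measure.dirac x, by simp [Measure.dirac_apply, hx], fun _ => integrable_dirac enorm_lt_top,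
    fun _ => (integral_dirac _ x).symm⟩

lemma sum_mul_nonneg_of_mem_momCone {y : A → ℝ} (hy : y ∈ momCone A K) {c : A → ℝ}
    (hc : ∀ x ∈ K, 0 ≤ polyA A c x) : 0 ≤ ∑ α : A, c α * y α := by
  obtain ⟨μ, hμK, hμ, hy⟩ := hy
  have hμK' : ∀ᵐ x ∂μ, x ∈ K := mem_ae_iff.2 hμK
  simp only [hy, ← integral_polyA hμ]
  exact integral_nonneg_of_ae (hμK'.mono hc)

end momCone

lemma isClosed_setOf_forall_sum_mul_nonneg {ι : Type*} [Fintype ι] (S : Set (ι → ℝ)) :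
    IsClosed {y : ι → ℝ | ∀ c ∈ S, 0 ≤ ∑ i, c i * y i} := by
  simp only [Set.ofPred_forall]
  exact isClosed_iInter fun c => isClosed_iInter fun _ => isClosed_le continuous_const (by fun_prop)

lemma ContinuousLinearMap.apply_eq_sum_mul {R ι : Type*} [CommSemiring R] [TopologicalSpace R]
    [Fintype ι] [DecidableEq ι] (f : (ι → R) →L[R] R) (y : ι → R) :
    f y = ∑ i, f (Pi.single i 1) * y i := by
  conv_lhs => rw [← Finset.univ_sum_single y]
  refine (map_sum f _ _).trans (Finset.sum_congr rfl fun i _ => ?_)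
  rw [mul_comm, ← smul_eq_mul, ← map_smul, ← Pi.single_smul', smul_eq_mul, mul_one]

lemma PointedCone.exists_nonneg_neg_of_notMem_closure {E : Type*} [TopologicalSpace E]
    [AddCommGroup E] [IsTopologicalAddGroup E] [Module ℝ E] [ContinuousSMul ℝ E]
    [LocallyConvexSpace ℝ E]
    (C : PointedCone ℝ E) {x : E} (hx : x ∉ closure (C : Set E)) :
    ∃ f : StrongDual ℝ E, (∀ z ∈ C, 0 ≤ f z) ∧ f x < 0 := by
  obtain ⟨f, hfC, hfx⟩ := ProperCone.hyperplane_separation_point (Submodule.closure C) hx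
  exact ⟨f, fun z hz => hfC z (subset_closure hz), hfx⟩

theorem stmt1_general {n : ℕ} (A : Finset (Fin n → ℕ)) (K : Set (Fin n → ℝ)) :
    closure (momCone A K) =
      {y : A → ℝ | ∀ c : A → ℝ, (∀ x ∈ K, 0 ≤ polyA A c x) → 0 ≤ ∑ α : A, c α * y α} := by
  refine subset_antisymm (closure_minimal (fun y hy c hc => sum_mul_nonneg_of_mem_momCone hy hc)
    (isClosed_setOf_forall_sum_mul_nonneg _)) fun y hy => ?_
  by_contra hy_notMem
  obtain ⟨f, hf, hfy⟩ := (momPointedCone A K).exists_nonneg_neg_of_notMem_closure hy_notMem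
  set c : A → ℝ := fun α => f (Pi.single α 1)
  have hc : ∀ x ∈ K, 0 ≤ polyA A c x := fun x hx => by
    have hfx := hf _ (moments_dirac_mem_momCone hx)
    rwa [f.apply_eq_sum_mul] at hfx
  have hcy := hy c hc
  rw [f.apply_eq_sum_mul] at hfy
  linarith

/-- `cl(R_A(K)) = P_A(K)*` — the closure of the truncated moment cone is the
dual cone of the polynomials supported on `A` that are nonnegative on `K`. -/
theorem stmt1 {n : ℕ} (A : Finset (Fin n → ℕ)) (K : Set (Fin n → ℝ)) (hK : IsClosed K) :
    closure (momCone A K) =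
      {y : A → ℝ | ∀ c : A → ℝ, (∀ x ∈ K, 0 ≤ polyA A c x) → 0 ≤ ∑ α : A, c α * y α} :=
  stmt1_general A K
end

section
/- If K ⊆ ℝ^n is compact and H is a finite-dimensional subspace of ℝ[x] containing a polynomial strictly positive on K, then every K-positive linear functional L : H → ℝ (i.e., L(p) ≥ 0 whenever p ∈ H is nonnegative on K) admits a finitely atomic representation: there exist m ≤ dim H points u_1, ..., u_m ∈ K and positive weights λ_1, ..., λ_m such that L(p) = Σ_i λ_i p(u_i) for all p ∈ H. -/
/-!
Normalise by the strictly positive `f`: the functionals `p ↦ p(x) / f(x)`, `x ∈ K`, form a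
compact set `S` in the dual of `H` lying on the hyperplane `{ℓ | ℓ f = 1}`, and `L / L f` lies in
the convex hull of `S`, since otherwise a separating functional would be evaluation at some
`q ∈ H` with `q > u f` on `K` but `L q < u L f`, contradicting positivity. Carathéodory's theorem
writes `L / L f` as a positive combination of affinely independent points of `S`; on a hyperplane
avoiding `0` these are linearly independent, so there are at most `dim H` of them.
If `L f = 0`, then `L = 0`, because every `p ∈ H` satisfies `|p| ≤ C f` on `K`.
-/

open Module Set

section Convex

variable {E : Type*} [AddCommGroup E] [Module ℝ E]

theorem AffineIndependent.linearIndependent_of_forall_eq_one {ι : Type*} {z : ι → E}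
    (hz : AffineIndependent ℝ z) {ψ : E →ₗ[ℝ] ℝ} (hψ : ∀ i, ψ (z i) = 1) :
    LinearIndependent ℝ z := by
  refine linearIndependent_iff'.2 fun s g hg => affineIndependent_iff.1 hz s g ?_ hg
  simpa [map_sum, hψ] using congrArg ψ hg

theorem exists_fin_convex_combination_of_mem_convexHull {s : Set E} {v : E}
    (hv : v ∈ convexHull ℝ s) :
    ∃ (m : ℕ) (z : Fin m → E) (w : Fin m → ℝ), AffineIndependent ℝ z ∧
      (∀ i, z i ∈ s ∧ 0 < w i) ∧ ∑ i, w i = 1 ∧ ∑ i, w i • z i = v := by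
  obtain ⟨ι, _, z, w, hzs, hz, hw, hw₁, hv⟩ := eq_pos_convex_span_of_mem_convexHull hv
  let σ := (Fintype.equivFin ι).symm
  refine ⟨Fintype.card ι, z ∘ σ, w ∘ σ, hz.comp_embedding σ.toEmbedding,
    fun i => ⟨hzs (mem_range_self _), hw _⟩, ?_, ?_⟩
  · rwa [← σ.sum_comp] at hw₁
  · rwa [← σ.sum_comp] at hv

theorem exists_pos_combination_of_mem_convexHull_of_forall_eq_one [FiniteDimensional ℝ E]
    {s : Set E} {ψ : E →ₗ[ℝ] ℝ} (hψ : ∀ y ∈ s, ψ y = 1) {v : E} (hv : v ∈ convexHull ℝ s) :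
    ∃ m ≤ finrank ℝ E, ∃ (z : Fin m → E) (w : Fin m → ℝ),
      (∀ i, z i ∈ s ∧ 0 < w i) ∧ v = ∑ i, w i • z i := by
  obtain ⟨m, z, w, hz, hzw, -, hv⟩ := exists_fin_convex_combination_of_mem_convexHull hv
  have hm :=
    (hz.linearIndependent_of_forall_eq_one fun i => hψ _ (hzw i).1).fintype_card_le_finrank
  exact ⟨m, by simpa using hm, z, w, hzw, hv.symm⟩

variable [TopologicalSpace E] [ContinuousSMul ℝ E]

theorem IsCompact.convexHull [ContinuousAdd E] [FiniteDimensional ℝ E] {s : Set E}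
    (hs : IsCompact s) :
    IsCompact (_root_.convexHull ℝ s) := by
  have hcover : _root_.convexHull ℝ s = ⋃ m : Fin (finrank ℝ E + 2),
      (fun q : (Fin m → ℝ) × (Fin m → E) => ∑ i, q.1 i • q.2 i) ''
        (stdSimplex ℝ (Fin m) ×ˢ univ.pi fun _ => s) := by
    refine Subset.antisymm (fun v hv => ?_) (iUnion_subset fun m => ?_)
    · obtain ⟨m, z, w, hz, hzw, hw₁, hv⟩ := exists_fin_convex_combination_of_mem_convexHull hv
      have hm : m < finrank ℝ E + 2 := by
        have := hz.card_le_finrank_succ.trans (Nat.succ_le_succ (Submodule.finrank_le _))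
        rw [Fintype.card_fin] at this
        omega
      exact mem_iUnion.2 ⟨⟨m, hm⟩, (w, z),
        ⟨⟨fun i => (hzw i).2.le, hw₁⟩, fun i _ => (hzw i).1⟩, hv⟩
    · rintro _ ⟨⟨w, z⟩, ⟨hw, hz⟩, rfl⟩
      exact (convex_convexHull ℝ s).sum_mem (fun i _ => hw.1 i) hw.2
        fun i _ => subset_convexHull ℝ s (hz i (mem_univ i))
  rw [hcover]
  exact isCompact_iUnion fun m =>
    ((isCompact_stdSimplex ℝ _).prod (isCompact_univ_pi fun _ => hs)).image (by fun_prop)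

theorem mem_convexHull_of_forall_lt_imp_le [IsTopologicalAddGroup E] [FiniteDimensional ℝ E]
    [T2Space E] [LocallyConvexSpace ℝ E] {s : Set E} (hs : IsCompact s) {v : E}
    (h : ∀ (g : E →ₗ[ℝ] ℝ) (u : ℝ), (∀ y ∈ s, u < g y) → u ≤ g v) :
    v ∈ convexHull ℝ s := by
  by_contra hv
  obtain ⟨g, u, hgv, hgs⟩ :=
    geometric_hahn_banach_point_closed (convex_convexHull ℝ s) hs.convexHull.isClosed hv
  exact (h g u fun y hy => hgs y (subset_convexHull ℝ s hy)).not_gt hgv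

end Convex

theorem IsCompact.exists_abs_le_mul {X : Type*} [TopologicalSpace X] {K : Set X}
    (hK : IsCompact K) {g h : X → ℝ} (hg : ContinuousOn g K) (hh : ContinuousOn h K)
    (hpos : ∀ x ∈ K, 0 < h x) : ∃ C, ∀ x ∈ K, |g x| ≤ C * h x := by
  obtain ⟨C, hC⟩ := hK.exists_bound_of_continuousOn (hg.div hh fun x hx => (hpos x hx).ne')
  refine ⟨C, fun x hx => ?_⟩
  have := hC x hx
  rwa [Real.norm_eq_abs, Pi.div_apply, abs_div, abs_of_pos (hpos x hx),
    div_le_iff₀ (hpos x hx)] at this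

section PositiveFunctional

variable {X V : Type*} [AddCommGroup V] [Module ℝ V]
  (e : V →ₗ[ℝ] X → ℝ) {K : Set X} {f : V} {L : Dual ℝ V}

def evalDual (x : X) : Dual ℝ V := LinearMap.proj x ∘ₗ e

@[simp]
theorem evalDual_apply (x : X) (p : V) : evalDual e x p = e p x := rfl

variable {e}

theorem eq_zero_of_apply_eq_zero [TopologicalSpace X] (hK : IsCompact K)
    (he : ∀ p, ContinuousOn (e p) K) (hf : ∀ x ∈ K, 0 < e f x)
    (hL : ∀ p, (∀ x ∈ K, 0 ≤ e p x) → 0 ≤ L p) (hLf : L f = 0) :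
    L = 0 := by
  ext p
  obtain ⟨C, hC⟩ := hK.exists_abs_le_mul (he p) (he f) hf
  have h₁ : 0 ≤ L (C • f - p) := hL _ fun x hx => by
    simpa using (abs_le.1 (hC x hx)).2
  have h₂ : 0 ≤ L (C • f + p) := hL _ fun x hx => by
    simpa [← sub_eq_add_neg, sub_nonneg, neg_le_iff_add_nonneg'] using (abs_le.1 (hC x hx)).1
  simp only [map_sub, map_add, map_smul, hLf, smul_zero, zero_sub, zero_add] at h₁ h₂
  simp only [LinearMap.zero_apply]
  linarith

theorem inv_smul_mem_convexHull_image [FiniteDimensional ℝ V] {E : Type*}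
    [NormedAddCommGroup E] [NormedSpace ℝ E] [FiniteDimensional ℝ E] (c : Dual ℝ V →ₗ[ℝ] E)
    (hS : IsCompact ((fun x => (e f x)⁻¹ • c (evalDual e x)) '' K))
    (hf : ∀ x ∈ K, 0 < e f x) (hL : ∀ p, (∀ x ∈ K, 0 ≤ e p x) → 0 ≤ L p) (hLf : 0 < L f) :
    (L f)⁻¹ • c L ∈ convexHull ℝ ((fun x => (e f x)⁻¹ • c (evalDual e x)) '' K) := by
  refine mem_convexHull_of_forall_lt_imp_le hS fun g u hgu => ?_
  -- `g ∘ c` is evaluation at some `q ∈ V`, and `q - u • f` is then positive on `K`.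
  set q := (evalEquiv ℝ V).symm (g ∘ₗ c)
  have hq : ∀ ℓ : Dual ℝ V, ℓ q = g (c ℓ) := fun ℓ => apply_evalEquiv_symm_apply ℝ V ℓ _
  have hqf : 0 ≤ L (q - u • f) := hL _ fun x hx => by
    have := (lt_inv_mul_iff₀ (hf x hx)).1 (by simpa using hgu _ ⟨x, hx, rfl⟩)
    have hqx := hq (evalDual e x)
    simp only [evalDual_apply] at hqx
    simp only [map_sub, map_smul, Pi.sub_apply, Pi.smul_apply, smul_eq_mul, hqx]
    linarith
  rw [map_sub, map_smul, hq, smul_eq_mul, sub_nonneg] at hqf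
  rw [map_smul, smul_eq_mul, le_inv_mul_iff₀ hLf, mul_comm]
  exact hqf

theorem exists_atomic_representation [TopologicalSpace X] [FiniteDimensional ℝ V]
    (hK : IsCompact K) (he : ∀ p, ContinuousOn (e p) K) (hf : ∀ x ∈ K, 0 < e f x)
    (hL : ∀ p, (∀ x ∈ K, 0 ≤ e p x) → 0 ≤ L p) :
    ∃ m ≤ finrank ℝ V, ∃ (u : Fin m → X) (lam : Fin m → ℝ),
      (∀ i, u i ∈ K ∧ 0 < lam i) ∧ ∀ p, L p = ∑ i, lam i * e p (u i) := by
  rcases (hL f fun x hx => (hf x hx).le).eq_or_lt with hLf | hLf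
  · refine ⟨0, Nat.zero_le _, Fin.elim0, Fin.elim0, fun i => i.elim0, fun p => ?_⟩
    simp [eq_zero_of_apply_eq_zero hK he hf hL hLf.symm]
  set b := finBasis ℝ V
  set c : Dual ℝ V ≃ₗ[ℝ] (Fin (finrank ℝ V) → ℝ) := b.dualBasis.equivFun
  set Φ : X → (Fin (finrank ℝ V) → ℝ) := fun x => (e f x)⁻¹ • c (evalDual e x)
  have hΦ : ContinuousOn Φ K := continuousOn_pi.2 fun i =>
    (((he f).inv₀ fun x hx => (hf x hx).ne').mul (he (b i))).congr fun x _ => by simp [Φ, c]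
  have hv := inv_smul_mem_convexHull_image c.toLinearMap (hK.image_of_continuousOn hΦ) hf hL hLf
  obtain ⟨m, hm, z, w, hzw, hv⟩ :=
    exists_pos_combination_of_mem_convexHull_of_forall_eq_one
      (ψ := Dual.eval ℝ V f ∘ₗ c.symm.toLinearMap)
      (by rintro _ ⟨x, hx, rfl⟩; simp [(hf x hx).ne']) hv
  simp only [LinearEquiv.coe_coe] at hv hzw
  choose u huK hu using fun i => (hzw i).1
  refine ⟨m, by simpa using hm, u, fun i => L f * w i * (e f (u i))⁻¹,
    fun i => ⟨huK i, by have := hf _ (huK i); have := (hzw i).2; positivity⟩, fun p => ?_⟩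
  have hLsum : L = ∑ i, (L f * w i * (e f (u i))⁻¹) • evalDual e (u i) := by
    apply c.injective
    rw [← smul_inv_smul₀ hLf.ne' (c L), hv]
    simp only [← hu, map_sum, map_smul, Finset.smul_sum, smul_smul, mul_assoc]
  simpa using congrArg (fun ℓ : Dual ℝ V => ℓ p) hLsum

end PositiveFunctional

open MvPolynomial

/-- if `K ⊆ ℝ^n` is compact and `H` is a finite-dimensional subspace of `ℝ[x]`
containing a polynomial strictly positive on `K`, then every `K`-positive linear functional
`L : H → ℝ` is finitely atomically representable with at most `dim H` atoms in `K` and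
positive weights. -/
theorem stmt2 {n : ℕ} (K : Set (Fin n → ℝ)) (hK : IsCompact K)
    (H : Submodule ℝ (MvPolynomial (Fin n) ℝ)) [FiniteDimensional ℝ H]
    (f : MvPolynomial (Fin n) ℝ) (hfH : f ∈ H) (hfpos : ∀ x ∈ K, 0 < eval x f)
    (L : H →ₗ[ℝ] ℝ)
    (hL : ∀ p : H, (∀ x ∈ K, 0 ≤ eval x (p : MvPolynomial (Fin n) ℝ)) → 0 ≤ L p) :
    ∃ m : ℕ, m ≤ Module.finrank ℝ H ∧
      ∃ (u : Fin m → (Fin n → ℝ)) (lam : Fin m → ℝ),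
        (∀ i, u i ∈ K ∧ 0 < lam i) ∧
        ∀ p : H, L p = ∑ i, lam i * eval (u i) (p : MvPolynomial (Fin n) ℝ) :=
  exists_atomic_representation (e := evalₗ ℝ (Fin n) ∘ₗ H.subtype) (f := (⟨f, hfH⟩ : H)) hK
    (fun p => (continuous_eval (p : MvPolynomial (Fin n) ℝ)).continuousOn) hfpos hL
end

section
/- If K is compact and there exists q ∈ ℝ[x]_A with q > 0 on K, then the interior of the cone P_A(K) of polynomials in ℝ[x]_A nonnegative on K equals the set of polynomials in ℝ[x]_A that are strictly positive on K. -/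
open MeasureTheory Finset

lemma polyA_apply_sub {n : ℕ} (A : Finset (Fin n → ℕ)) (c c' : A → ℝ) (x : Fin n → ℝ) :
    polyA A (c - c') x = polyA A c x - polyA A c' x := by
  simp [polyA, sub_mul, Finset.sum_sub_distrib]

lemma polyA_smul {n : ℕ} (A : Finset (Fin n → ℕ)) (t : ℝ) (c : A → ℝ) (x : Fin n → ℝ) :
    polyA A (t • c) x = t * polyA A c x := by
  simp [polyA, Finset.mul_sum, mul_assoc]

lemma continuous_mono {n : ℕ} (α : Fin n → ℕ) : Continuous (mono α) := by
  unfold mono; fun_prop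

lemma continuous_polyA {n : ℕ} (A : Finset (Fin n → ℕ)) (c : A → ℝ) :
    Continuous (polyA A c) := by
  unfold polyA
  exact continuous_finset_sum _ fun α _ => continuous_const.mul (continuous_mono _)

/-- if `K` is compact nonempty and some polynomial supported on `A` is strictly
positive on `K`, then the interior of `P_A(K)` (in the coefficient space `ℝ^A`) is exactly
the set of polynomials supported on `A` that are strictly positive on `K`. -/
theorem stmt4 {n : ℕ} (A : Finset (Fin n → ℕ)) (K : Set (Fin n → ℝ)) (hK : IsCompact K)
    (hne : K.Nonempty) (q : A → ℝ) (hq : ∀ x ∈ K, 0 < polyA A q x) :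
    interior {c : A → ℝ | ∀ x ∈ K, 0 ≤ polyA A c x} =
      {c : A → ℝ | ∀ x ∈ K, 0 < polyA A c x} := by

  ext c
  simp only [Set.mem_setOf_eq]
  constructor
  · intro hc x hx
    obtain ⟨ε, hε, hball⟩ := Metric.isOpen_iff.1 isOpen_interior c hc
    set t := ε / (2 * (‖q‖ + 1)) with ht
    have hq1 : (0:ℝ) < ‖q‖ + 1 := by positivity
    have htpos : 0 < t := by positivity
    have hmem : c - t • q ∈ interior {c : A → ℝ | ∀ x ∈ K, 0 ≤ polyA A c x} := by
      apply hball
      rw [Metric.mem_ball, dist_eq_norm, show c - t • q - c = -(t • q) by abel, norm_neg,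
        norm_smul, Real.norm_eq_abs, abs_of_pos htpos, ht]
      rw [div_mul_eq_mul_div, div_lt_iff₀ (by positivity)]
      nlinarith [norm_nonneg q]
    have h2 := interior_subset hmem x hx
    have hsub : polyA A (c - t • q) x = polyA A c x - t * polyA A q x := by
      rw [polyA_apply_sub, polyA_smul]
    nlinarith [hq x hx, h2, hsub]
  · intro hc
    obtain ⟨x0, hx0, hmin⟩ := hK.exists_isMinOn hne (continuous_polyA A c).continuousOn
    have hε : 0 < polyA A c x0 := hc x0 hx0
    set ε := polyA A c x0 with hεdef
    have hg : Continuous fun x => ∑ α : A, |mono (α : Fin n → ℕ) x| :=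
      continuous_finset_sum _ fun α _ => (continuous_mono _).abs
    obtain ⟨x1, hx1, hmax⟩ := hK.exists_isMaxOn hne hg.continuousOn
    set B := ∑ α : A, |mono (α : Fin n → ℕ) x1| with hB
    have hB0 : 0 ≤ B := Finset.sum_nonneg fun _ _ => abs_nonneg _
    rw [mem_interior_iff_mem_nhds, Metric.mem_nhds_iff]
    refine ⟨ε / (B + 1), by positivity, fun c' hc' x hx => ?_⟩
    have hdist : ‖c' - c‖ < ε / (B + 1) := by
      rw [← dist_eq_norm]; exact Metric.mem_ball.1 hc'
    have hbound : |polyA A (c' - c) x| ≤ ‖c' - c‖ * B := by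
      calc |polyA A (c' - c) x| ≤ ∑ α : A, |(c' - c) α * mono (α : Fin n → ℕ) x| :=
            Finset.abs_sum_le_sum_abs _ _
        _ ≤ ∑ α : A, ‖c' - c‖ * |mono (α : Fin n → ℕ) x| := by
            apply Finset.sum_le_sum; intro α _
            rw [abs_mul]
            exact mul_le_mul_of_nonneg_right (norm_le_pi_norm (c' - c) α) (abs_nonneg _)
        _ = ‖c' - c‖ * ∑ α : A, |mono (α : Fin n → ℕ) x| := by rw [← Finset.mul_sum]
        _ ≤ ‖c' - c‖ * B := mul_le_mul_of_nonneg_left (hmax hx) (norm_nonneg _)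
    have hεx : ε ≤ polyA A c x := hmin hx
    have heq : polyA A c' x = polyA A c x + polyA A (c' - c) x := by
      rw [polyA_apply_sub]; ring
    have h1 : ‖c' - c‖ * B < ε := by
      calc ‖c' - c‖ * B ≤ ‖c' - c‖ * (B + 1) := by nlinarith [norm_nonneg (c' - c)]
        _ < ε / (B + 1) * (B + 1) := by
            apply mul_lt_mul_of_pos_right hdist; positivity
        _ = ε := by field_simp
    have := neg_abs_le (polyA A (c' - c) x)
    linarith [abs_le.1 hbound]
end

section
/- The linear span of the truncated moment cone R_A(K) equals the orthogonal complement of the vanishing ideal: Span R_A(K) = {y ∈ ℝ^A : ⟨p, y⟩ = 0 for all p ∈ ℝ[x]_A with p ≡ 0 on K}. Consequently dim R_A(K) = |A| − dim I(K)_A. -/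
open MeasureTheory Finset

/-- The vanishing ideal `I(K)_A`: coefficient vectors of polynomials supported on `A`
that vanish identically on `K`, as a submodule of `ℝ^A`. -/
noncomputable def vanishIdeal {n : ℕ} (A : Finset (Fin n → ℕ)) (K : Set (Fin n → ℝ)) :
    Submodule ℝ (A → ℝ) where
  carrier := {c | ∀ x ∈ K, polyA A c x = 0}
  add_mem' := by
    intro a b ha hb x hx
    have h : polyA A (a + b) x = polyA A a x + polyA A b x := by
      simp [polyA, add_mul, Finset.sum_add_distrib]
    rw [h, ha x hx, hb x hx, add_zero]
  zero_mem' := by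
    intro x hx
    simp [polyA]
  smul_mem' := by
    intro r a ha x hx
    have h : polyA A (r • a) x = r * polyA A a x := by
      simp [polyA, Finset.mul_sum, mul_assoc]
    rw [h, ha x hx, mul_zero]

/-
Integrating against a representing measure turns `⟨c, y⟩` into `∫ p_c dμ`, which vanishes when
`p_c ≡ 0` on `K ⊇ supp μ`; so `R_A(K) ⊆ I(K)_A^⊥`. Conversely, the point evaluations
`(x^α)_{α ∈ A}`, `x ∈ K`, lie in `R_A(K)` (Dirac measures), and `c ⊥` all of them says exactly
that `p_c` vanishes on `K`. Hence `I(K)_A = (Span R_A(K))^⊥` for the dot product, and taking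
orthogonals again in the finite-dimensional space `ℝ^A` gives both claims.
-/

section DotProduct

variable (𝕜 ι : Type*) [Field 𝕜] [Fintype ι]

abbrev dotProductForm : LinearMap.BilinForm 𝕜 (ι → 𝕜) := dotProductBilin 𝕜 𝕜

theorem dotProductForm_isRefl : (dotProductForm 𝕜 ι).IsRefl :=
  fun v w h => by simpa [dotProduct_comm] using h

theorem dotProductForm_nondegenerate : (dotProductForm 𝕜 ι).Nondegenerate := by
  classical
  refine (dotProductForm_isRefl 𝕜 ι).nondegenerate_iff_separatingLeft.mpr fun v hv => ?_
  funext i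
  simpa using hv (Pi.single i 1)

end DotProduct

section MomentCone

variable {n : ℕ} (A : Finset (Fin n → ℕ))

noncomputable def monomialVector (x : Fin n → ℝ) : A → ℝ := fun α => mono (α : Fin n → ℕ) x

theorem polyA_eq_dotProduct (c : A → ℝ) (x : Fin n → ℝ) :
    polyA A c x = c ⬝ᵥ monomialVector A x :=
  rfl

theorem monomialVector_mem_momCone {K : Set (Fin n → ℝ)} {x : Fin n → ℝ} (hx : x ∈ K) :
    monomialVector A x ∈ momCone A K := by
  refine ⟨Measure.dirac x, ?_, fun α => ?_, fun α => (integral_dirac _ x).symm⟩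
  · simp [Measure.dirac_apply, hx]
  · exact (integrable_const _).congr (ae_eq_dirac _).symm

theorem dotProduct_eq_integral_polyA {μ : Measure (Fin n → ℝ)}
    (hint : ∀ α : A, Integrable (mono (α : Fin n → ℕ)) μ) (c : A → ℝ) :
    c ⬝ᵥ (fun α => ∫ x, mono (α : Fin n → ℕ) x ∂μ) = ∫ x, polyA A c x ∂μ := by
  simp only [dotProduct, polyA, ← integral_const_mul]
  exact (integral_finsetSum _ fun α _ => (hint α).const_mul _).symm

theorem dotProduct_eq_zero_of_mem_vanishIdeal_of_mem_momCone {K : Set (Fin n → ℝ)}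
    {c y : A → ℝ} (hc : c ∈ vanishIdeal A K) (hy : y ∈ momCone A K) : c ⬝ᵥ y = 0 := by
  obtain ⟨μ, hμK, hint, hy⟩ := hy
  rw [funext hy, dotProduct_eq_integral_polyA A hint]
  refine integral_eq_zero_of_ae (ae_iff.mpr (measure_mono_null ?_ hμK))
  exact fun x hx hxK => hx (hc x hxK)

theorem vanishIdeal_eq_orthogonal_span_momCone (K : Set (Fin n → ℝ)) :
    vanishIdeal A K = (dotProductForm ℝ A).orthogonal (Submodule.span ℝ (momCone A K)) := by
  ext c
  rw [LinearMap.BilinForm.mem_orthogonal_iff]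
  constructor
  · intro hc y hy
    have hspan : Submodule.span ℝ (momCone A K) ≤ LinearMap.ker ((dotProductForm ℝ A).flip c) :=
      Submodule.span_le.mpr fun z hz => by
        simpa [dotProduct_comm] using dotProduct_eq_zero_of_mem_vanishIdeal_of_mem_momCone A hc hz
    exact hspan hy
  · intro hc x hx
    rw [polyA_eq_dotProduct, dotProduct_comm]
    exact hc _ (Submodule.subset_span (monomialVector_mem_momCone A hx))

theorem span_momCone_eq_orthogonal_vanishIdeal (K : Set (Fin n → ℝ)) :
    Submodule.span ℝ (momCone A K) = (dotProductForm ℝ A).orthogonal (vanishIdeal A K) := by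
  rw [vanishIdeal_eq_orthogonal_span_momCone, LinearMap.BilinForm.orthogonal_orthogonal
    (dotProductForm_nondegenerate ℝ A) (dotProductForm_isRefl ℝ A)]

end MomentCone

theorem stmt5_general {n : ℕ} (A : Finset (Fin n → ℕ)) (K : Set (Fin n → ℝ)) :
    ((Submodule.span ℝ (momCone A K) : Submodule ℝ (A → ℝ)) : Set (A → ℝ)) =
        {y : A → ℝ | ∀ c ∈ vanishIdeal A K, ∑ α : A, c α * y α = 0} ∧
      Module.finrank ℝ (Submodule.span ℝ (momCone A K)) =
        A.card - Module.finrank ℝ (vanishIdeal A K) := by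
  rw [span_momCone_eq_orthogonal_vanishIdeal]
  refine ⟨Set.ext fun y => LinearMap.BilinForm.mem_orthogonal_iff, ?_⟩
  rw [LinearMap.BilinForm.finrank_orthogonal (dotProductForm_nondegenerate ℝ A),
    Module.finrank_fintype_fun_eq_card, Fintype.card_coe]

/-- `Span R_A(K) = I(K)_A^⊥` and `dim R_A(K) = |A| − dim I(K)_A`. -/
theorem stmt5 {n : ℕ} (A : Finset (Fin n → ℕ)) (K : Set (Fin n → ℝ)) (hK : IsClosed K)
    (hne : K.Nonempty) :
    ((Submodule.span ℝ (momCone A K) : Submodule ℝ (A → ℝ)) : Set (A → ℝ)) =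
        {y : A → ℝ | ∀ c ∈ vanishIdeal A K, ∑ α : A, c α * y α = 0} ∧
      Module.finrank ℝ (Submodule.span ℝ (momCone A K)) =
        A.card - Module.finrank ℝ (vanishIdeal A K) :=
  stmt5_general A K
end

section
/- If the vanishing ideal I(K)_A = {0} (no nonzero polynomial in ℝ[x]_A vanishes identically on K), then the truncated moment cone R_A(K) has nonempty interior in ℝ^A. -/
open MeasureTheory Finset

/-!
`R_A(K)` is convex and contains `0` and the moment vectors `(x^α)_{α ∈ A}` of the points
`x ∈ K` (moments of the zero measure and of Dirac masses). If no nonzero polynomial supported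
on `A` vanishes on `K`, these moment vectors span `ℝ^A`, so together with `0` their affine span
is everything, and a convex set with full affine span in a finite-dimensional space has
nonempty interior.
-/

theorem Submodule.span_eq_top_of_dotProduct_eq_zero {ι 𝕜 : Type*} [Fintype ι] [DecidableEq ι]
    [Field 𝕜] {S : Set (ι → 𝕜)} (h : ∀ c : ι → 𝕜, (∀ v ∈ S, c ⬝ᵥ v = 0) → c = 0) :
    Submodule.span 𝕜 S = ⊤ := by
  by_contra hS
  obtain ⟨f, hf, hfS⟩ := exists_dual_map_eq_bot_of_lt_top (Ne.lt_top hS) inferInstance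
  set c := (dotProductEquiv 𝕜 ι).symm f
  have hcf : ∀ v, c ⬝ᵥ v = f v := fun v => by
    simp only [c, ← dotProductEquiv_apply_apply, LinearEquiv.apply_symm_apply]
  refine hf <| (dotProductEquiv 𝕜 ι).symm.injective ?_
  rw [map_zero]
  refine h c fun v hv => ?_
  rw [hcf, ← Submodule.mem_bot 𝕜, ← hfS]
  exact Submodule.mem_map_of_mem (Submodule.subset_span hv)

noncomputable def momentVector {n : ℕ} (A : Finset (Fin n → ℕ)) (x : Fin n → ℝ) : A → ℝ :=
  fun α => mono (α : Fin n → ℕ) x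

theorem polyA_eq_dotProduct_momentVector {n : ℕ} (A : Finset (Fin n → ℕ)) (c : A → ℝ)
    (x : Fin n → ℝ) : polyA A c x = c ⬝ᵥ momentVector A x := rfl

namespace momCone

variable {n : ℕ} (A : Finset (Fin n → ℕ)) (K : Set (Fin n → ℝ))

theorem zero_mem : (0 : A → ℝ) ∈ momCone A K :=
  ⟨0, rfl, fun _ => integrable_zero_measure, fun _ => by simp⟩

theorem momentVector_mem {x : Fin n → ℝ} (hx : x ∈ K) : momentVector A x ∈ momCone A K :=
  ⟨Measure.dirac x, by simp [Measure.dirac_apply, hx],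
    fun _ => integrable_dirac ENNReal.coe_lt_top, fun _ => by simp [momentVector]⟩

variable {A K}

theorem smul_mem {y : A → ℝ} (hy : y ∈ momCone A K) {a : ℝ} (ha : 0 ≤ a) :
    a • y ∈ momCone A K := by
  obtain ⟨μ, hμK, hint, hy⟩ := hy
  refine ⟨ENNReal.ofReal a • μ, by simp [hμK],
    fun α => (hint α).smul_measure ENNReal.ofReal_ne_top, fun α => ?_⟩
  rw [integral_smul_measure, ENNReal.toReal_ofReal ha, Pi.smul_apply, hy]

theorem add_mem {y z : A → ℝ} (hy : y ∈ momCone A K) (hz : z ∈ momCone A K) :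
    y + z ∈ momCone A K := by
  obtain ⟨μ, hμK, hμint, hy⟩ := hy
  obtain ⟨ν, hνK, hνint, hz⟩ := hz
  refine ⟨μ + ν, by simp [hμK, hνK], fun α => (hμint α).add_measure (hνint α), fun α => ?_⟩
  rw [integral_add_measure (hμint α) (hνint α), Pi.add_apply, hy, hz]

theorem convex : Convex ℝ (momCone A K) :=
  fun _ hy _ hz _ _ ha hb _ => add_mem (smul_mem hy ha) (smul_mem hz hb)

theorem span_momentVector_eq_top
    (h : ∀ c : A → ℝ, (∀ x ∈ K, polyA A c x = 0) → c = 0) :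
    Submodule.span ℝ (momentVector A '' K) = ⊤ := by
  classical
  refine Submodule.span_eq_top_of_dotProduct_eq_zero fun c hc => h c fun x hx => ?_
  rw [polyA_eq_dotProduct_momentVector]
  exact hc _ ⟨x, hx, rfl⟩

end momCone

theorem stmt6_general {n : ℕ} (A : Finset (Fin n → ℕ)) (K : Set (Fin n → ℝ))
    (h : ∀ c : A → ℝ, (∀ x ∈ K, polyA A c x = 0) → c = 0) :
    (interior (momCone A K)).Nonempty := by
  have hspan : affineSpan ℝ (insert 0 (momentVector A '' K)) = ⊤ := by
    rw [← AffineSubspace.coe_eq_univ_iff, affineSpan_insert_zero,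
      momCone.span_momentVector_eq_top h, Submodule.top_coe]
  have hsub : convexHull ℝ (insert 0 (momentVector A '' K)) ⊆ momCone A K :=
    convexHull_min (Set.insert_subset (momCone.zero_mem A K) (Set.image_subset_iff.2 fun _ =>
      momCone.momentVector_mem A K)) momCone.convex
  exact (interior_convexHull_nonempty_iff_affineSpan_eq_top.2 hspan).mono (interior_mono hsub)

/-- if no nonzero polynomial supported on `A` vanishes identically on `K`,
then the truncated moment cone `R_A(K)` has nonempty interior in `ℝ^A`. -/
theorem stmt6 {n : ℕ} (A : Finset (Fin n → ℕ)) (K : Set (Fin n → ℝ)) (hK : IsClosed K)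
    (hne : K.Nonempty)
    (h : ∀ c : A → ℝ, (∀ x ∈ K, polyA A c x = 0) → c = 0) :
    (interior (momCone A K)).Nonempty :=
  stmt6_general A K h
end

section
/- If K is closed at infinity, then a polynomial p is nonnegative on K if and only if its homogenization p̃ is nonnegative on the compact set K̃ = {(x₀,x) : x₀ ≥ 0, x₀² + ‖x‖² = 1, c̃_i(x₀,x) = 0 (i ∈ E), c̃_j(x₀,x) ≥ 0 (j ∈ I)}. -/
open MvPolynomial

/-- Evaluation at `(x₀, x)` of the homogenization `p̃(x₀,x) = x₀^{deg p} p(x/x₀)` of `p`,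
given by `∑_α p_α x₀^{deg p − |α|} x^α`. -/
noncomputable def homEval {n : ℕ} (p : MvPolynomial (Fin n) ℝ) (x₀ : ℝ) (x : Fin n → ℝ) : ℝ :=
  ∑ α ∈ p.support, p.coeff α * x₀ ^ (p.totalDegree - α.sum fun _ e => e) * ∏ i, x i ^ α i

/-- The semialgebraic set `K = {x : c_i(x) = 0 (i ∈ E), c_j(x) ≥ 0 (j ∈ I)}`. -/
def semiSet {n : ℕ} {ι : Type*} (E I : Set ι) (g : ι → MvPolynomial (Fin n) ℝ) :
    Set (Fin n → ℝ) :=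
  {x | (∀ i ∈ E, eval x (g i) = 0) ∧ (∀ j ∈ I, 0 ≤ eval x (g j))}

/-- The homogenized cone `K̃^c` with strictly positive `x₀`-coordinate. -/
def tildeC {n : ℕ} {ι : Type*} (E I : Set ι) (g : ι → MvPolynomial (Fin n) ℝ) :
    Set (ℝ × (Fin n → ℝ)) :=
  {z | 0 < z.1 ∧ (∀ i ∈ E, homEval (g i) z.1 z.2 = 0) ∧ (∀ j ∈ I, 0 ≤ homEval (g j) z.1 z.2)}

/-- The homogenized cone `K̃^h` with nonnegative `x₀`-coordinate. -/
def tildeH {n : ℕ} {ι : Type*} (E I : Set ι) (g : ι → MvPolynomial (Fin n) ℝ) :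
    Set (ℝ × (Fin n → ℝ)) :=
  {z | 0 ≤ z.1 ∧ (∀ i ∈ E, homEval (g i) z.1 z.2 = 0) ∧ (∀ j ∈ I, 0 ≤ homEval (g j) z.1 z.2)}

/-- `K` is closed at infinity: `cl(K̃^c) = K̃^h`. -/
def closedAtInfty {n : ℕ} {ι : Type*} (E I : Set ι) (g : ι → MvPolynomial (Fin n) ℝ) : Prop :=
  closure (tildeC E I g) = tildeH E I g

/-- The compact homogenized set `K̃ = K̃^h ∩ {x₀² + ‖x‖² = 1}`. -/
def tildeK {n : ℕ} {ι : Type*} (E I : Set ι) (g : ι → MvPolynomial (Fin n) ℝ) :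
    Set (ℝ × (Fin n → ℝ)) :=
  tildeH E I g ∩ {z | z.1 ^ 2 + ∑ i, z.2 i ^ 2 = 1}

/-!
The homogenization is homogeneous, `p̃(t x₀, t x) = t^{deg p} p̃(x₀, x)`, and `p̃(1, x) = p(x)`;
so for `t > 0` the sign of `p̃(t, t x)` is that of `p(x)`, and `K̃^c` is exactly the cone
`{(t, t x) : t > 0, x ∈ K}`. Hence `p ≥ 0` on `K` iff `p̃ ≥ 0` on `K̃^c`. Nonnegativity of the
continuous `p̃` passes from `K̃^c` to its closure, which is `K̃^h ⊇ K̃` when `K` is closed at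
infinity; conversely every point `x ∈ K` has the rescaling `(1, x) / ‖(1, x)‖` in `K̃`.
-/

section Homogenization

variable {n : ℕ}

lemma homEval_mul_smul (p : MvPolynomial (Fin n) ℝ) (t x₀ : ℝ) (x : Fin n → ℝ) :
    homEval p (t * x₀) (t • x) = t ^ p.totalDegree * homEval p x₀ x := by
  unfold homEval
  rw [Finset.mul_sum]
  refine Finset.sum_congr rfl fun α hα => ?_
  have hdeg : (α.sum fun _ e => e) = ∑ i, α i := Finsupp.sum_fintype _ _ fun _ => rfl
  have hprod : ∏ i, (t • x) i ^ α i = t ^ (∑ i, α i) * ∏ i, x i ^ α i := by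
    simp only [Pi.smul_apply, smul_eq_mul, mul_pow, Finset.prod_mul_distrib,
      Finset.prod_pow_eq_pow_sum]
  obtain ⟨k, hk⟩ := Nat.exists_eq_add_of_le (le_totalDegree hα)
  rw [hprod, ← hdeg, hk, Nat.add_sub_cancel_left]
  ring

lemma homEval_one (p : MvPolynomial (Fin n) ℝ) (x : Fin n → ℝ) :
    homEval p 1 x = eval x p := by
  rw [homEval, eval_eq']
  exact Finset.sum_congr rfl fun α _ => by rw [one_pow, mul_one]

lemma homEval_smul (p : MvPolynomial (Fin n) ℝ) (t : ℝ) (x : Fin n → ℝ) :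
    homEval p t (t • x) = t ^ p.totalDegree * eval x p := by
  simpa [homEval_one] using homEval_mul_smul p t 1 x

lemma homEval_smul_nonneg_iff (p : MvPolynomial (Fin n) ℝ) {t : ℝ} (ht : 0 < t)
    (x : Fin n → ℝ) : 0 ≤ homEval p t (t • x) ↔ 0 ≤ eval x p := by
  rw [homEval_smul, mul_nonneg_iff_of_pos_left (pow_pos ht _)]

lemma homEval_smul_eq_zero_iff (p : MvPolynomial (Fin n) ℝ) {t : ℝ} (ht : t ≠ 0)
    (x : Fin n → ℝ) : homEval p t (t • x) = 0 ↔ eval x p = 0 := by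
  rw [homEval_smul, mul_eq_zero, or_iff_right (pow_ne_zero _ ht)]

lemma continuous_homEval (p : MvPolynomial (Fin n) ℝ) :
    Continuous fun z : ℝ × (Fin n → ℝ) => homEval p z.1 z.2 := by
  unfold homEval
  fun_prop

end Homogenization

section HomogenizedSets

variable {n : ℕ} {ι : Type*} {E I : Set ι} {g : ι → MvPolynomial (Fin n) ℝ}

lemma mk_smul_mem_tildeC_iff {t : ℝ} (ht : 0 < t) (x : Fin n → ℝ) :
    (t, t • x) ∈ tildeC E I g ↔ x ∈ semiSet E I g := by
  simp only [tildeC, semiSet, Set.mem_ofPred_eq, ht, true_and,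
    homEval_smul_eq_zero_iff _ ht.ne', homEval_smul_nonneg_iff _ ht]

lemma tildeC_subset_tildeH : tildeC E I g ⊆ tildeH E I g :=
  fun _ ⟨hz₀, hzE, hzI⟩ => ⟨hz₀.le, hzE, hzI⟩

lemma homEval_nonneg_of_mem_tildeC {p : MvPolynomial (Fin n) ℝ}
    (hp : ∀ x ∈ semiSet E I g, 0 ≤ eval x p) {z : ℝ × (Fin n → ℝ)} (hz : z ∈ tildeC E I g) :
    0 ≤ homEval p z.1 z.2 := by
  obtain ⟨t, y⟩ := z
  have ht : 0 < t := hz.1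
  rw [← smul_inv_smul₀ ht.ne' y] at hz ⊢
  exact (homEval_smul_nonneg_iff p ht _).2 (hp _ ((mk_smul_mem_tildeC_iff ht _).1 hz))

lemma exists_pos_smul_mem_tildeK {x : Fin n → ℝ} (hx : x ∈ semiSet E I g) :
    ∃ t > 0, (t, t • x) ∈ tildeK E I g := by
  set S : ℝ := 1 + ∑ i, x i ^ 2
  have hS : 0 < S := by positivity
  refine ⟨(√S)⁻¹, by positivity, tildeC_subset_tildeH ?_, ?_⟩
  · exact (mk_smul_mem_tildeC_iff (by positivity) x).2 hx
  · calc ((√S)⁻¹) ^ 2 + ∑ i, ((√S)⁻¹ • x) i ^ 2 = ((√S) ^ 2)⁻¹ * S := by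
          simp only [Pi.smul_apply, smul_eq_mul, mul_pow, ← Finset.mul_sum, inv_pow, S]
          ring
      _ = 1 := by rw [Real.sq_sqrt hS.le, inv_mul_cancel₀ hS.ne']

end HomogenizedSets

/-- if `K` is closed at infinity, then `p ≥ 0` on `K` iff its homogenization
`p̃` is nonnegative on the compact set `K̃`. -/
theorem stmt9 {n : ℕ} {ι : Type*} (E I : Set ι) (g : ι → MvPolynomial (Fin n) ℝ)
    (hinf : closedAtInfty E I g) (p : MvPolynomial (Fin n) ℝ) :
    (∀ x ∈ semiSet E I g, 0 ≤ eval x p) ↔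
      ∀ z ∈ tildeK E I g, 0 ≤ homEval p z.1 z.2 := by
  constructor
  · intro hp z hz
    have hclosed : IsClosed {z : ℝ × (Fin n → ℝ) | 0 ≤ homEval p z.1 z.2} :=
      isClosed_le continuous_const (continuous_homEval p)
    have hz_closure : z ∈ closure (tildeC E I g) := hinf ▸ hz.1
    exact closure_minimal (fun _ => homEval_nonneg_of_mem_tildeC hp) hclosed hz_closure
  · intro hp x hx
    obtain ⟨t, ht, hz⟩ := exists_pos_smul_mem_tildeK hx
    exact (homEval_smul_nonneg_iff p ht x).1 (hp _ hz)
end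

section
/- Archimedean Putinar Positivstellensatz: let S = {x ∈ ℝ^n : h(x) = 0, g(x) ≥ 0} for polynomial tuples h, g, and suppose Ideal(h) + QM(g) contains N − ‖x‖² for some N > 0. If a polynomial p is strictly positive on S, then p ∈ Ideal(h) + QM(g). -/
open MvPolynomial

/-- Membership in the quadratic module `QM(g) = Σ[x] + g_1·Σ[x] + ⋯ + g_ℓ·Σ[x]`. -/
def inQM {n ℓ : ℕ} (g : Fin ℓ → MvPolynomial (Fin n) ℝ) (p : MvPolynomial (Fin n) ℝ) : Prop :=
  ∃ σ₀ : MvPolynomial (Fin n) ℝ, IsSumSq σ₀ ∧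
    ∃ σ : Fin ℓ → MvPolynomial (Fin n) ℝ, (∀ j, IsSumSq (σ j)) ∧
      p = σ₀ + ∑ j, σ j * g j

/-- Membership in `Ideal(h) + QM(g)`. -/
def inCone {n t ℓ : ℕ} (h : Fin t → MvPolynomial (Fin n) ℝ)
    (g : Fin ℓ → MvPolynomial (Fin n) ℝ) (p : MvPolynomial (Fin n) ℝ) : Prop :=
  ∃ a ∈ Ideal.span (Set.range h), ∃ b : MvPolynomial (Fin n) ℝ, inQM g b ∧ p = a + b

/-!
Let `M = Ideal(h) + QM(g)` and suppose `p ∉ M`. In an archimedean quadratic module `M`,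
`σ b - 1 ∈ M` with `σ` a sum of squares forces `b ∈ M`. Hence `M - Σ·p` is still proper, so by
Zorn it lies in a maximal proper quadratic module `Q`, and the same property gives
`Q ∪ -Q = ℝ[x]`. For such `Q`, `f ↦ inf {r | r - f ∈ Q}` is an `ℝ`-algebra character of `ℝ[x]`,
i.e. evaluation at a point `x`. As `h, -h, g ∈ M ⊆ Q` the point lies in `S`, while `-p ∈ Q`
gives `p(x) ≤ 0`.
-/

section CommRing

variable {A : Type*} [CommRing A]

structure IsQuadraticModule (Q : Set A) : Prop where
  add_mem {a b : A} : a ∈ Q → b ∈ Q → a + b ∈ Q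
  mul_self_mul_mem (s : A) {a : A} : a ∈ Q → s * s * a ∈ Q
  one_mem : (1 : A) ∈ Q

def addSumSqMul (Q : Set A) (f : A) : Set A :=
  {x | ∃ q ∈ Q, ∃ σ, IsSumSq σ ∧ x = q + σ * f}

namespace IsQuadraticModule

variable {Q : Set A}

theorem zero_mem (hQ : IsQuadraticModule Q) : (0 : A) ∈ Q := by
  simpa using hQ.mul_self_mul_mem 0 hQ.one_mem

theorem isSumSq_mul_mem (hQ : IsQuadraticModule Q) {σ a : A} (hσ : IsSumSq σ) (ha : a ∈ Q) :
    σ * a ∈ Q := by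
  induction hσ with
  | zero => simpa using hQ.zero_mem
  | sq_add s _ ih => simpa only [add_mul] using hQ.add_mem (hQ.mul_self_mul_mem s ha) ih

theorem mem_of_isSumSq (hQ : IsQuadraticModule Q) {σ : A} (hσ : IsSumSq σ) : σ ∈ Q := by
  simpa using hQ.isSumSq_mul_mem hσ hQ.one_mem

theorem sUnion {c : Set (Set A)} (hc : ∀ Q ∈ c, IsQuadraticModule Q)
    (hchain : IsChain (· ⊆ ·) c) (hne : c.Nonempty) : IsQuadraticModule (⋃₀ c) where
  add_mem := by
    rintro a b ⟨Q, hQ, ha⟩ ⟨Q', hQ', hb⟩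
    rcases hchain.total hQ hQ' with h | h
    · exact ⟨Q', hQ', (hc Q' hQ').add_mem (h ha) hb⟩
    · exact ⟨Q, hQ, (hc Q hQ).add_mem ha (h hb)⟩
  mul_self_mul_mem s := by
    rintro a ⟨Q, hQ, ha⟩
    exact ⟨Q, hQ, (hc Q hQ).mul_self_mul_mem s ha⟩
  one_mem := by
    obtain ⟨Q, hQ⟩ := hne
    exact ⟨Q, hQ, (hc Q hQ).one_mem⟩

theorem exists_maximal_superset (hQ : IsQuadraticModule Q) (hQ₁ : (-1 : A) ∉ Q) :
    ∃ Q', Q ⊆ Q' ∧ Maximal (· ∈ {P : Set A | IsQuadraticModule P ∧ (-1 : A) ∉ P}) Q' := by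
  refine zorn_subset_nonempty _ (fun c hc hchain hne => ?_) Q ⟨hQ, hQ₁⟩
  refine ⟨⋃₀ c, ⟨sUnion (fun P hP => (hc hP).1) hchain hne, ?_⟩,
    fun P hP => Set.subset_sUnion_of_mem hP⟩
  rintro ⟨P, hP, h₁⟩
  exact (hc hP).2 h₁

theorem addSumSqMul (hQ : IsQuadraticModule Q) (f : A) :
    IsQuadraticModule (_root_.addSumSqMul Q f) where
  add_mem := by
    rintro _ _ ⟨q, hq, σ, hσ, rfl⟩ ⟨q', hq', σ', hσ', rfl⟩
    exact ⟨q + q', hQ.add_mem hq hq', σ + σ', hσ.add hσ', by ring⟩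
  mul_self_mul_mem s := by
    rintro _ ⟨q, hq, σ, hσ, rfl⟩
    exact ⟨s * s * q, hQ.mul_self_mul_mem s hq, s * s * σ,
      (IsSquare.mul_self s).isSumSq.mul hσ, by ring⟩
  one_mem := ⟨1, hQ.one_mem, 0, .zero, by ring⟩

theorem mem_addSumSqMul_self (hQ : IsQuadraticModule Q) (f : A) : f ∈ _root_.addSumSqMul Q f :=
  ⟨0, hQ.zero_mem, 1, .one, by ring⟩

end IsQuadraticModule

theorem subset_addSumSqMul (Q : Set A) (f : A) : Q ⊆ addSumSqMul Q f :=
  fun q hq => ⟨q, hq, 0, .zero, by ring⟩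

end CommRing

section RealAlgebra

variable {A : Type*} [CommRing A] [Algebra ℝ A]

def IsArchimedean (Q : Set A) : Prop :=
  ∀ f : A, ∃ c : ℝ, algebraMap ℝ A c - f ∈ Q

theorem IsArchimedean.mono {Q Q' : Set A} (hQ : IsArchimedean Q) (h : Q ⊆ Q') :
    IsArchimedean Q' :=
  fun f => (hQ f).imp fun _ hc => h hc

namespace IsQuadraticModule

variable {Q : Set A}

theorem algebraMap_mul_mem (hQ : IsQuadraticModule Q) {c : ℝ} (hc : 0 ≤ c) {a : A}
    (ha : a ∈ Q) : algebraMap ℝ A c * a ∈ Q := by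
  simpa [← map_mul, Real.mul_self_sqrt hc] using hQ.mul_self_mul_mem (algebraMap ℝ A √c) ha

theorem algebraMap_mem (hQ : IsQuadraticModule Q) {c : ℝ} (hc : 0 ≤ c) :
    algebraMap ℝ A c ∈ Q := by
  simpa using hQ.algebraMap_mul_mem hc hQ.one_mem

theorem mem_of_algebraMap_mul_mem (hQ : IsQuadraticModule Q) {c : ℝ} (hc : 0 < c) {a : A}
    (h : algebraMap ℝ A c * a ∈ Q) : a ∈ Q := by
  simpa [← mul_assoc, ← map_mul, inv_mul_cancel₀ hc.ne'] using
    hQ.algebraMap_mul_mem (inv_nonneg.mpr hc.le) h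

theorem algebraMap_add_mem_of_le (hQ : IsQuadraticModule Q) {r s : ℝ} (hrs : r ≤ s) {a : A}
    (h : algebraMap ℝ A r + a ∈ Q) : algebraMap ℝ A s + a ∈ Q := by
  have := hQ.add_mem (hQ.algebraMap_mem (sub_nonneg.mpr hrs)) h
  rwa [← add_assoc, ← map_add, sub_add_cancel] at this

theorem algebraMap_sub_mem_of_le (hQ : IsQuadraticModule Q) {r s : ℝ} (hrs : r ≤ s) {a : A}
    (h : algebraMap ℝ A r - a ∈ Q) : algebraMap ℝ A s - a ∈ Q := by
  rw [sub_eq_add_neg] at h ⊢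
  exact hQ.algebraMap_add_mem_of_le hrs h

theorem neg_one_mem_of_algebraMap_mem (hQ : IsQuadraticModule Q) {c : ℝ} (hc : c < 0)
    (h : algebraMap ℝ A c ∈ Q) : (-1 : A) ∈ Q := by
  simpa [← map_mul, inv_mul_cancel₀ hc.ne] using
    hQ.algebraMap_mul_mem (neg_nonneg.mpr (inv_nonpos.mpr hc.le)) h

/-- One step of the descent in `mem_of_isSumSq_mul_sub_one_mem`: it rests on the identity
`(μ - σ)²(r + b) + 2μ(σb - 1) + (μ - σ²b) + rσ(2μ - σ) = μ²(r - μ⁻¹ + b)`. -/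
theorem algebraMap_sub_inv_add_mem (hQ : IsQuadraticModule Q) {σ b : A} (hσ : IsSumSq σ)
    (hb : σ * b - 1 ∈ Q) {μ : ℝ} (hμ : 0 < μ) (hσμ : algebraMap ℝ A (2 * μ) - σ ∈ Q)
    (hσbμ : algebraMap ℝ A μ - σ * σ * b ∈ Q) {r : ℝ} (hr : 0 ≤ r)
    (h : algebraMap ℝ A r + b ∈ Q) : algebraMap ℝ A (r - μ⁻¹) + b ∈ Q := by
  have hsum := hQ.add_mem (hQ.add_mem (hQ.add_mem
    (hQ.mul_self_mul_mem (algebraMap ℝ A μ - σ) h)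
    (hQ.algebraMap_mul_mem (by positivity : 0 ≤ 2 * μ) hb)) hσbμ)
    (hQ.algebraMap_mul_mem hr (hQ.isSumSq_mul_mem hσ hσμ))
  refine hQ.mem_of_algebraMap_mul_mem (pow_pos hμ 2) ?_
  have hscalar : μ ^ 2 * (r - μ⁻¹) = μ ^ 2 * r - μ := by field_simp
  rw [mul_add, ← map_mul, hscalar]
  convert hsum using 1
  simp only [map_sub, map_mul, map_pow, map_ofNat]
  ring

/-- Starting from some `r` with `r + b ∈ Q`, `algebraMap_sub_inv_add_mem` lowers `r` by the
fixed amount `μ⁻¹` until it is nonpositive. -/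
theorem mem_of_isSumSq_mul_sub_one_mem (hQ : IsQuadraticModule Q) (harch : IsArchimedean Q)
    {σ b : A} (hσ : IsSumSq σ) (hb : σ * b - 1 ∈ Q) : b ∈ Q := by
  obtain ⟨k, hk⟩ := harch σ
  obtain ⟨c, hc⟩ := harch (σ * σ * b)
  obtain ⟨r₀, hr₀⟩ := harch (-b)
  rw [sub_neg_eq_add] at hr₀
  set μ := max (max k c) 1
  have hμ : 0 < μ := lt_of_lt_of_le one_pos (le_max_right _ _)
  have hkμ : k ≤ 2 * μ := by linarith [le_max_left k c, le_max_left (max k c) 1]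
  have hcμ : c ≤ μ := (le_max_right k c).trans (le_max_left _ _)
  have hσμ := hQ.algebraMap_sub_mem_of_le hkμ hk
  have hσbμ := hQ.algebraMap_sub_mem_of_le hcμ hc
  have descent : ∀ m : ℕ, ∀ r : ℝ, r ≤ m * μ⁻¹ → algebraMap ℝ A r + b ∈ Q → b ∈ Q := by
    intro m
    induction m with
    | zero =>
      intro r hr h
      simpa using hQ.algebraMap_add_mem_of_le (s := 0) (by simpa using hr) h
    | succ m ih =>
      intro r hr h
      rcases le_or_gt r 0 with hr0 | hr0
      · simpa using hQ.algebraMap_add_mem_of_le hr0 h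
      · refine ih (r - μ⁻¹) (by push_cast at hr; linarith) ?_
        exact hQ.algebraMap_sub_inv_add_mem hσ hb hμ hσμ hσbμ hr0.le h
  obtain ⟨m, hm⟩ := exists_nat_ge (r₀ * μ)
  refine descent m r₀ ?_ hr₀
  rwa [← div_eq_mul_inv, le_div_iff₀ hμ]

end IsQuadraticModule

end RealAlgebra

section State

variable {A : Type*} [CommRing A] [Algebra ℝ A]

structure IsTotalArchimedean (Q : Set A) : Prop extends IsQuadraticModule Q where
  archimedean : IsArchimedean Q
  neg_one_notMem : (-1 : A) ∉ Q
  mem_or_neg_mem (f : A) : f ∈ Q ∨ -f ∈ Q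

/-- The least real upper bound of `f` in the order defined by `Q`. -/
noncomputable def state (Q : Set A) (f : A) : ℝ :=
  sInf {r : ℝ | algebraMap ℝ A r - f ∈ Q}

namespace IsTotalArchimedean

variable {Q : Set A}

theorem bddBelow_setOf_sub_mem (hQ : IsTotalArchimedean Q) (f : A) :
    BddBelow {r : ℝ | algebraMap ℝ A r - f ∈ Q} := by
  obtain ⟨c, hc⟩ := hQ.archimedean (-f)
  refine ⟨-c, fun r hr => not_lt.mp fun hrc => hQ.neg_one_notMem ?_⟩
  refine hQ.neg_one_mem_of_algebraMap_mem (c := r + c) (by linarith) ?_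
  simpa [map_add] using hQ.add_mem hr hc

theorem state_le (hQ : IsTotalArchimedean Q) {f : A} {r : ℝ}
    (h : algebraMap ℝ A r - f ∈ Q) : state Q f ≤ r :=
  csInf_le (hQ.bddBelow_setOf_sub_mem f) h

theorem sub_mem_of_state_lt (hQ : IsTotalArchimedean Q) {f : A} {s : ℝ} (h : state Q f < s) :
    algebraMap ℝ A s - f ∈ Q := by
  obtain ⟨r, hr, hrs⟩ := exists_lt_of_csInf_lt ((hQ.archimedean f).imp fun _ => id) h
  exact hQ.algebraMap_sub_mem_of_le hrs.le hr

theorem sub_mem_of_lt_state (hQ : IsTotalArchimedean Q) {f : A} {r : ℝ} (h : r < state Q f) :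
    f - algebraMap ℝ A r ∈ Q := by
  refine (hQ.mem_or_neg_mem _).resolve_right fun hneg => ?_
  rw [neg_sub] at hneg
  exact (hQ.state_le hneg).not_gt h

theorem le_state (hQ : IsTotalArchimedean Q) {f : A} {r : ℝ} (h : f - algebraMap ℝ A r ∈ Q) :
    r ≤ state Q f := by
  refine le_of_forall_gt_imp_ge_of_dense fun s hs => not_lt.mp fun hsr => hQ.neg_one_notMem ?_
  refine hQ.neg_one_mem_of_algebraMap_mem (c := s - r) (by linarith) ?_
  simpa [map_sub] using hQ.add_mem (hQ.sub_mem_of_state_lt hs) h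

theorem state_eq (hQ : IsTotalArchimedean Q) {f : A} {a : ℝ}
    (hup : ∀ s, a < s → algebraMap ℝ A s - f ∈ Q)
    (hlow : ∀ r, r < a → f - algebraMap ℝ A r ∈ Q) : state Q f = a :=
  le_antisymm (le_of_forall_gt_imp_ge_of_dense fun s hs => hQ.state_le (hup s hs))
    (le_of_forall_lt_imp_le_of_dense fun r hr => hQ.le_state (hlow r hr))

theorem state_nonneg (hQ : IsTotalArchimedean Q) {f : A} (hf : f ∈ Q) : 0 ≤ state Q f :=
  hQ.le_state (by simpa using hf)

theorem state_algebraMap (hQ : IsTotalArchimedean Q) (c : ℝ) :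
    state Q (algebraMap ℝ A c) = c :=
  hQ.state_eq (fun s hs => by simpa [← map_sub] using hQ.algebraMap_mem (sub_nonneg.mpr hs.le))
    (fun r hr => by simpa [← map_sub] using hQ.algebraMap_mem (sub_nonneg.mpr hr.le))

theorem state_add (hQ : IsTotalArchimedean Q) (f g : A) :
    state Q (f + g) = state Q f + state Q g := by
  refine hQ.state_eq (fun s hs => ?_) (fun r hr => ?_)
  · obtain ⟨s₁, hs₁, hs₂⟩ : ∃ s₁, state Q f < s₁ ∧ state Q g < s - s₁ :=
      ⟨state Q f + (s - state Q f - state Q g) / 2, by linarith, by linarith⟩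
    convert hQ.add_mem (hQ.sub_mem_of_state_lt hs₁) (hQ.sub_mem_of_state_lt hs₂) using 1
    rw [map_sub]; ring
  · obtain ⟨r₁, hr₁, hr₂⟩ : ∃ r₁, r₁ < state Q f ∧ r - r₁ < state Q g :=
      ⟨state Q f - (state Q f + state Q g - r) / 2, by linarith, by linarith⟩
    convert hQ.add_mem (hQ.sub_mem_of_lt_state hr₁) (hQ.sub_mem_of_lt_state hr₂) using 1
    rw [map_sub]; ring

theorem state_neg (hQ : IsTotalArchimedean Q) (f : A) : state Q (-f) = -state Q f :=
  hQ.state_eq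
    (fun s hs => by
      simpa [sub_eq_add_neg, add_comm] using hQ.sub_mem_of_lt_state (r := -s) (by linarith))
    (fun r hr => by
      simpa [sub_eq_add_neg, add_comm] using hQ.sub_mem_of_state_lt (s := -r) (by linarith))

theorem state_algebraMap_mul_of_pos (hQ : IsTotalArchimedean Q) {c : ℝ} (hc : 0 < c) (f : A) :
    state Q (algebraMap ℝ A c * f) = c * state Q f := by
  have hscale (t : ℝ) : algebraMap ℝ A t = algebraMap ℝ A c * algebraMap ℝ A (t / c) := by
    rw [← map_mul, mul_div_cancel₀ t hc.ne']
  refine hQ.state_eq (fun s hs => ?_) (fun r hr => ?_)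
  · rw [hscale s, ← mul_sub]
    exact hQ.algebraMap_mul_mem hc.le (hQ.sub_mem_of_state_lt (by rwa [lt_div_iff₀' hc]))
  · rw [hscale r, ← mul_sub]
    exact hQ.algebraMap_mul_mem hc.le (hQ.sub_mem_of_lt_state (by rwa [div_lt_iff₀' hc]))

theorem state_algebraMap_mul (hQ : IsTotalArchimedean Q) (c : ℝ) (f : A) :
    state Q (algebraMap ℝ A c * f) = c * state Q f := by
  rcases lt_trichotomy c 0 with hc | rfl | hc
  · have h := hQ.state_algebraMap_mul_of_pos (neg_pos.mpr hc) f
    rw [map_neg, neg_mul, hQ.state_neg, neg_mul, neg_inj] at h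
    exact h
  · simpa using hQ.state_algebraMap 0
  · exact hQ.state_algebraMap_mul_of_pos hc f

theorem state_sub (hQ : IsTotalArchimedean Q) (f g : A) :
    state Q (f - g) = state Q f - state Q g := by
  rw [sub_eq_add_neg, hQ.state_add, hQ.state_neg, sub_eq_add_neg]

/-- `-δ ≤ f ≤ δ` in the order of `Q` gives `f² ≤ δ²`, since
`2δ(δ² - f²) = (δ + f)²(δ - f) + (δ - f)²(δ + f)`. -/
theorem state_mul_self_of_state_eq_zero (hQ : IsTotalArchimedean Q) {f : A}
    (hf : state Q f = 0) : state Q (f * f) = 0 := by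
  refine le_antisymm (le_of_forall_pos_le_add fun ε hε => ?_)
    (hQ.state_nonneg (by simpa using hQ.mul_self_mul_mem f hQ.one_mem))
  set δ := √ε
  have hδ : 0 < δ := Real.sqrt_pos.mpr hε
  have hup : algebraMap ℝ A δ - f ∈ Q := hQ.sub_mem_of_state_lt (by rwa [hf])
  have hdown : f - algebraMap ℝ A (-δ) ∈ Q := hQ.sub_mem_of_lt_state (by rw [hf]; linarith)
  have h := hQ.add_mem (hQ.mul_self_mul_mem (algebraMap ℝ A δ + f) hup)
    (hQ.mul_self_mul_mem (algebraMap ℝ A δ - f) hdown)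
  have hsq : algebraMap ℝ A (δ * δ) - f * f ∈ Q := by
    refine hQ.mem_of_algebraMap_mul_mem (by positivity : 0 < 2 * δ) ?_
    convert h using 1
    simp only [map_mul, map_neg, map_ofNat]
    ring
  simpa [δ, Real.mul_self_sqrt hε.le] using hQ.state_le hsq

theorem state_mul_self (hQ : IsTotalArchimedean Q) (f : A) :
    state Q (f * f) = state Q f * state Q f := by
  set a := state Q f
  have h₀ : state Q (f - algebraMap ℝ A a) = 0 := by
    rw [hQ.state_sub, hQ.state_algebraMap, sub_self]
  have hexpand : f * f = (f - algebraMap ℝ A a) * (f - algebraMap ℝ A a)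
      + algebraMap ℝ A (2 * a) * (f - algebraMap ℝ A a) + algebraMap ℝ A (a * a) := by
    simp only [map_mul, map_ofNat]
    ring
  rw [hexpand, hQ.state_add, hQ.state_add, hQ.state_mul_self_of_state_eq_zero h₀,
    hQ.state_algebraMap_mul, h₀, hQ.state_algebraMap]
  ring

theorem state_mul (hQ : IsTotalArchimedean Q) (f g : A) :
    state Q (f * g) = state Q f * state Q g := by
  have hpolar : algebraMap ℝ A 4 * (f * g) = (f + g) * (f + g) - (f - g) * (f - g) := by
    simp only [map_ofNat]
    ring
  have h := congrArg (state Q) hpolar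
  rw [hQ.state_algebraMap_mul, hQ.state_sub, hQ.state_mul_self, hQ.state_mul_self,
    hQ.state_add, hQ.state_sub] at h
  linarith

noncomputable def stateHom (hQ : IsTotalArchimedean Q) : A →ₐ[ℝ] ℝ where
  toFun := state Q
  map_one' := by simpa using hQ.state_algebraMap 1
  map_mul' := hQ.state_mul
  map_zero' := by simpa using hQ.state_algebraMap 0
  map_add' := hQ.state_add
  commutes' := hQ.state_algebraMap

theorem stateHom_nonneg (hQ : IsTotalArchimedean Q) {f : A} (hf : f ∈ Q) :
    0 ≤ hQ.stateHom f :=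
  hQ.state_nonneg hf

end IsTotalArchimedean

end State

namespace IsQuadraticModule

variable {A : Type*} [CommRing A] [Algebra ℝ A] {Q : Set A}

theorem neg_mem_of_neg_one_mem_addSumSqMul (hQ : IsQuadraticModule Q) (harch : IsArchimedean Q)
    {f : A} (h : (-1 : A) ∈ _root_.addSumSqMul Q f) : -f ∈ Q := by
  obtain ⟨q, hq, σ, hσ, hqσ⟩ := h
  exact hQ.mem_of_isSumSq_mul_sub_one_mem harch hσ (by rwa [show σ * -f - 1 = q by
    linear_combination hqσ])

theorem isTotalArchimedean_of_maximal
    (hmax : Maximal (· ∈ {P : Set A | IsQuadraticModule P ∧ (-1 : A) ∉ P}) Q)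
    (harch : IsArchimedean Q) : IsTotalArchimedean Q where
  toIsQuadraticModule := hmax.prop.1
  archimedean := harch
  neg_one_notMem := hmax.prop.2
  mem_or_neg_mem f := by
    refine or_iff_not_imp_left.mpr fun hf => ?_
    refine hmax.prop.1.neg_mem_of_neg_one_mem_addSumSqMul harch (not_not.mp fun h₁ => hf ?_)
    exact hmax.le_of_ge ⟨hmax.prop.1.addSumSqMul f, h₁⟩ (subset_addSumSqMul Q f)
      (hmax.prop.1.mem_addSumSqMul_self f)

theorem exists_algHom_nonneg_and_nonpos (hQ : IsQuadraticModule Q) (harch : IsArchimedean Q)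
    {p : A} (hp : p ∉ Q) : ∃ φ : A →ₐ[ℝ] ℝ, (∀ f ∈ Q, 0 ≤ φ f) ∧ φ p ≤ 0 := by
  have hQp := hQ.addSumSqMul (-p)
  have hQp₁ : (-1 : A) ∉ _root_.addSumSqMul Q (-p) := fun h => hp <| by
    simpa using hQ.neg_mem_of_neg_one_mem_addSumSqMul harch h
  obtain ⟨Q', hQpQ', hmax⟩ := hQp.exists_maximal_superset hQp₁
  have hQQ' := (subset_addSumSqMul Q (-p)).trans hQpQ'
  have hQ' := isTotalArchimedean_of_maximal hmax (harch.mono hQQ')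
  refine ⟨hQ'.stateHom, fun f hf => hQ'.stateHom_nonneg (hQQ' hf), ?_⟩
  simpa using hQ'.stateHom_nonneg (hQpQ' (hQ.mem_addSumSqMul_self (-p)))

end IsQuadraticModule

namespace IsQuadraticModule

variable {σ : Type*} {Q : Set (MvPolynomial σ ℝ)}

theorem exists_sub_mul_self_mem (hQ : IsQuadraticModule Q)
    (hX : ∀ i, ∃ N : ℝ, C N - X i * X i ∈ Q) (f : MvPolynomial σ ℝ) :
    ∃ c : ℝ, 0 ≤ c ∧ C c - f * f ∈ Q := by
  induction f using MvPolynomial.induction_on with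
  | C a => exact ⟨a * a, mul_self_nonneg a, by rw [← C_mul, sub_self]; exact hQ.zero_mem⟩
  | add f g hf hg =>
    obtain ⟨c, hc, hfc⟩ := hf
    obtain ⟨d, hd, hgd⟩ := hg
    refine ⟨2 * c + 2 * d, by positivity, ?_⟩
    convert hQ.add_mem (hQ.add_mem (hQ.mul_self_mul_mem (f - g) hQ.one_mem)
      (hQ.algebraMap_mul_mem zero_le_two hfc)) (hQ.algebraMap_mul_mem zero_le_two hgd) using 1
    simp only [algebraMap_eq, map_add, map_mul, map_ofNat]
    ring
  | mul_X f i hf =>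
    obtain ⟨c, hc, hfc⟩ := hf
    obtain ⟨N, hN⟩ := hX i
    have hN' : C (max N 0) - X i * X i ∈ Q := by
      simpa [algebraMap_eq] using hQ.algebraMap_sub_mem_of_le (le_max_left N 0)
        (by simpa [algebraMap_eq] using hN)
    refine ⟨c * max N 0, by positivity, ?_⟩
    convert hQ.add_mem (hQ.mul_self_mul_mem (X i) hfc) (hQ.algebraMap_mul_mem hc hN') using 1
    simp only [algebraMap_eq, map_mul]
    ring

/-- `c - f² ∈ Q` gives `(c + 1)/2 - f ∈ Q`, as `(c + 1) - 2f = (c - f²) + (f - 1)²`. -/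
theorem isArchimedean_of_forall_X (hQ : IsQuadraticModule Q)
    (hX : ∀ i, ∃ N : ℝ, C N - X i * X i ∈ Q) : IsArchimedean Q := by
  intro f
  obtain ⟨c, -, hfc⟩ := hQ.exists_sub_mul_self_mem hX f
  refine ⟨(c + 1) / 2, hQ.mem_of_algebraMap_mul_mem zero_lt_two ?_⟩
  convert hQ.add_mem hfc (hQ.mul_self_mul_mem (f - 1) hQ.one_mem) using 1
  rw [algebraMap_eq, mul_sub, ← C_mul, mul_div_cancel₀ _ two_ne_zero, C_add, C_1, map_ofNat]
  ring

theorem isArchimedean_of_sub_sum_sq_mem [Fintype σ] (hQ : IsQuadraticModule Q) {N : ℝ}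
    (hN : C N - ∑ i, X i ^ 2 ∈ Q) : IsArchimedean Q := by
  classical
  refine hQ.isArchimedean_of_forall_X fun i => ⟨N, ?_⟩
  convert hQ.add_mem hN (hQ.mem_of_isSumSq (IsSumSq.sum_sq (Finset.univ.erase i) X)) using 1
  rw [← Finset.sum_erase_add _ _ (Finset.mem_univ i)]
  ring

end IsQuadraticModule

section Cone

variable {n t ℓ : ℕ} (h : Fin t → MvPolynomial (Fin n) ℝ) (g : Fin ℓ → MvPolynomial (Fin n) ℝ)

theorem isQuadraticModule_inCone : IsQuadraticModule {f | inCone h g f} where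
  add_mem := by
    rintro _ _ ⟨a, ha, _, ⟨σ₀, hσ₀, σ, hσ, rfl⟩, rfl⟩ ⟨a', ha', _, ⟨τ₀, hτ₀, τ, hτ, rfl⟩, rfl⟩
    refine ⟨a + a', Ideal.add_mem _ ha ha', _, ⟨σ₀ + τ₀, hσ₀.add hτ₀, σ + τ,
      fun j => (hσ j).add (hτ j), rfl⟩, ?_⟩
    simp only [Pi.add_apply, add_mul, Finset.sum_add_distrib]
    ring
  mul_self_mul_mem s := by
    rintro _ ⟨a, ha, _, ⟨σ₀, hσ₀, σ, hσ, rfl⟩, rfl⟩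
    refine ⟨s * s * a, Ideal.mul_mem_left _ _ ha, _, ⟨s * s * σ₀,
      (IsSquare.mul_self s).isSumSq.mul hσ₀, fun j => s * s * σ j,
      fun j => (IsSquare.mul_self s).isSumSq.mul (hσ j), rfl⟩, ?_⟩
    simp only [Finset.mul_sum, mul_add, mul_assoc]
  one_mem := ⟨0, Ideal.zero_mem _, 1, ⟨1, .one, 0, fun _ => .zero, by simp⟩, by simp⟩

theorem inCone_of_mem_span {a : MvPolynomial (Fin n) ℝ} (ha : a ∈ Ideal.span (Set.range h)) :
    inCone h g a :=
  ⟨a, ha, 0, ⟨0, .zero, 0, fun _ => .zero, by simp⟩, by simp⟩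

theorem inCone_generator (j : Fin ℓ) : inCone h g (g j) := by
  classical
  refine ⟨0, Ideal.zero_mem _, g j, ⟨0, .zero, Pi.single j 1, fun j' => ?_, ?_⟩, by simp⟩
  · rcases eq_or_ne j' j with rfl | hj <;> simp [*]
  · simp [Pi.single_apply, ite_mul]

end Cone

/-- Putinar's Positivstellensatz: if `Ideal(h) + QM(g)` contains
`N − ‖x‖²` for some `N > 0` and `p > 0` on `S = {h = 0, g ≥ 0}`, then
`p ∈ Ideal(h) + QM(g)`. -/
theorem stmt14 {n t ℓ : ℕ} (h : Fin t → MvPolynomial (Fin n) ℝ)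
    (g : Fin ℓ → MvPolynomial (Fin n) ℝ)
    (harch : ∃ N : ℝ, 0 < N ∧ inCone h g (C N - ∑ i : Fin n, X i ^ 2))
    (p : MvPolynomial (Fin n) ℝ)
    (hp : ∀ x : Fin n → ℝ, (∀ i, eval x (h i) = 0) → (∀ j, 0 ≤ eval x (g j)) →
      0 < eval x p) :
    inCone h g p := by
  obtain ⟨N, -, hN⟩ := harch
  have hM := isQuadraticModule_inCone h g
  by_contra hpM
  obtain ⟨φ, hφM, hφp⟩ :=
    hM.exists_algHom_nonneg_and_nonpos (hM.isArchimedean_of_sub_sum_sq_mem hN) hpM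
  have hφ (f : MvPolynomial (Fin n) ℝ) : φ f = eval (φ ∘ X) f := by
    rw [← coe_aeval_eq_eval, ← aeval_unique]
    rfl
  refine (hp (φ ∘ X) (fun i => ?_) (fun j => ?_)).not_ge (hφ p ▸ hφp)
  · have hi : h i ∈ Ideal.span (Set.range h) := Ideal.subset_span ⟨i, rfl⟩
    rw [← hφ]
    refine le_antisymm ?_ (hφM _ (inCone_of_mem_span h g hi))
    simpa using hφM _ (inCone_of_mem_span h g (Submodule.neg_mem _ hi))
  · exact hφ (g j) ▸ hφM _ (inCone_generator h g j)
end

section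
/- The univariate truncated multi-sequence y = (1, 1, 1, 1, 2) ∈ ℝ^{ℕ¹_4} (i.e., y_0 = y_1 = y_2 = y_3 = 1, y_4 = 2) has a ℝ-positive Riesz functional but admits no representing Borel measure on ℝ. In particular, the moment cone R_4(ℝ) is not closed. -/
open MeasureTheory Filter

lemma integrable_dirac15 {f : ℝ → ℝ} (hf : Measurable f) (a : ℝ) :
    Integrable f (Measure.dirac a) := by
  refine ⟨hf.aestronglyMeasurable, ?_⟩
  rw [HasFiniteIntegral, lintegral_dirac' a (by measurability)]
  exact ENNReal.coe_lt_top

/-- The univariate truncated multi-sequence `y = (1, 1, 1, 1, 2)`. -/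
noncomputable def y15 : Fin 5 → ℝ := ![1, 1, 1, 1, 2]

/-- The moment cone `R_4(ℝ)` of truncated sequences of degree `≤ 4` admitting a
representing Borel measure on `ℝ`. -/
def momCone15 : Set (Fin 5 → ℝ) :=
  {z | ∃ μ : Measure ℝ, (∀ k : Fin 5, Integrable (fun x : ℝ => x ^ (k : ℕ)) μ) ∧
    ∀ k : Fin 5, z k = ∫ x, x ^ (k : ℕ) ∂μ}

lemma y15_notMem : y15 ∉ momCone15 := by
  rintro ⟨μ, hint, heq⟩
  have i0 : Integrable (fun _ : ℝ => (1:ℝ)) μ := by simpa using hint 0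
  have i1 : Integrable (fun x : ℝ => x) μ := by simpa using hint 1
  have i2 : Integrable (fun x : ℝ => x ^ 2) μ := by simpa using hint 2
  have e0 : (∫ _x, (1:ℝ) ∂μ) = 1 := by simpa [y15] using (heq 0).symm
  have e1 : (∫ x, x ∂μ) = 1 := by simpa [y15] using (heq 1).symm
  have e2 : (∫ x, x ^ 2 ∂μ) = 1 := by simpa [y15] using (heq 2).symm
  have e4 : (∫ x, x ^ 4 ∂μ) = 2 := by simpa [y15] using (heq 4).symm
  have hfeq : (fun x : ℝ => (x - 1) ^ 2) = fun x => x ^ 2 - 2 * x + 1 := by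
    funext x; ring
  have im : Integrable (fun x : ℝ => 2 * x) μ := i1.const_mul 2
  have isub : Integrable (fun x : ℝ => x ^ 2 - 2 * x) μ := i2.sub im
  have hf : Integrable (fun x : ℝ => (x - 1) ^ 2) μ := by
    rw [hfeq]; exact isub.add i0
  have hI : (∫ x, (x - 1) ^ 2 ∂μ) = 0 := by
    rw [hfeq, integral_add isub i0, integral_sub i2 im, integral_const_mul, e0, e1, e2]
    norm_num
  have hae : (fun x : ℝ => (x - 1) ^ 2) =ᵐ[μ] 0 :=
    (integral_eq_zero_iff_of_nonneg (fun x => sq_nonneg _) hf).mp hI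
  have hx1 : ∀ᵐ x ∂μ, x = 1 := by
    filter_upwards [hae] with x hx
    have : (x - 1) ^ 2 = 0 := hx
    have := pow_eq_zero_iff (n := 2) (by norm_num) |>.mp this
    linarith [sub_eq_zero.mp this]
  have : (∫ x, x ^ 4 ∂μ) = ∫ _x, (1:ℝ) ∂μ := by
    refine integral_congr_ae ?_
    filter_upwards [hx1] with x hx
    rw [hx]; norm_num
  rw [e4, e0] at this
  norm_num at this

/-- `y = (1,1,1,1,2)` has an `ℝ`-positive Riesz functional, admits no
representing Borel measure on `ℝ`, and in particular `R_4(ℝ)` is not closed. -/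
theorem stmt15 :
    (∀ p : Polynomial ℝ, p.natDegree ≤ 4 → (∀ x : ℝ, 0 ≤ p.eval x) →
      0 ≤ ∑ k : Fin 5, p.coeff (k : ℕ) * y15 k) ∧
    y15 ∉ momCone15 ∧
    ¬ IsClosed momCone15 := by
  refine ⟨?_, y15_notMem, ?_⟩
  · intro p hdeg hpos
    have hc4 : 0 ≤ p.coeff 4 := by
      by_contra h
      push_neg at h
      have hd : p.natDegree = 4 := by
        rcases lt_or_eq_of_le hdeg with h' | h'
        · exact absurd (Polynomial.coeff_eq_zero_of_natDegree_lt h') (by linarith)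
        · exact h'
      have hlc : p.leadingCoeff ≤ 0 := by
        rw [Polynomial.leadingCoeff, hd]; linarith
      have hdeg' : 0 < p.degree := by
        rw [Polynomial.degree_eq_natDegree (fun h0 => by simp [h0] at hd), hd]
        norm_num
      have := Polynomial.tendsto_atBot_of_leadingCoeff_nonpos p hdeg' hlc
      obtain ⟨x, hx⟩ := (this.eventually (eventually_lt_atBot 0)).exists
      exact absurd (hpos x) (not_le.mpr hx)
    have hev : p.eval 1 = p.coeff 0 + p.coeff 1 + p.coeff 2 + p.coeff 3 + p.coeff 4 := by
      rw [Polynomial.eval_eq_sum_range' (lt_of_le_of_lt hdeg (by norm_num : (4:ℕ) < 5))]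
      simp [Finset.sum_range_succ]
    have h1 : (0:ℝ) ≤ p.eval 1 := hpos 1
    have : ∑ k : Fin 5, p.coeff (k : ℕ) * y15 k
        = p.eval 1 + p.coeff 4 := by
      rw [Fin.sum_univ_five, hev,
        show (((0:Fin 5)):ℕ) = 0 from rfl, show (((1:Fin 5)):ℕ) = 1 from rfl,
        show (((2:Fin 5)):ℕ) = 2 from rfl, show (((3:Fin 5)):ℕ) = 3 from rfl,
        show (((4:Fin 5)):ℕ) = 4 from rfl]
      simp [y15]; ring
    rw [this]
    linarith
  · intro hcl
    set z : ℕ → Fin 5 → ℝ := fun n k => 1 + (n:ℝ) ^ (k:ℕ) / (n:ℝ) ^ 4 with hz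
    have hmem : ∀ n : ℕ, 1 ≤ n → z n ∈ momCone15 := by
      intro n hn
      have hn0 : (0:ℝ) < (n:ℝ) := by exact_mod_cast hn
      have hn4 : (0:ℝ) < (n:ℝ) ^ 4 := by positivity
      refine ⟨Measure.dirac 1 + ENNReal.ofReal (((n:ℝ)^4)⁻¹) • Measure.dirac (n:ℝ), ?_, ?_⟩
      · intro k
        exact ((integrable_dirac15 (by measurability) 1).add_measure
          ((integrable_dirac15 (by measurability) (n:ℝ)).smul_measure ENNReal.ofReal_ne_top))
      · intro k
        rw [integral_add_measure (integrable_dirac15 (by measurability) 1)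
          ((integrable_dirac15 (by measurability) (n:ℝ)).smul_measure ENNReal.ofReal_ne_top),
          integral_smul_measure, integral_dirac, integral_dirac,
          ENNReal.toReal_ofReal (by positivity)]
        simp [hz, smul_eq_mul, div_eq_inv_mul]
    have htend : Tendsto z atTop (nhds y15) := by
      rw [tendsto_pi_nhds]
      intro k
      have hbase : ∀ m : ℕ, m < 4 → Tendsto (fun n : ℕ => (n:ℝ) ^ m / (n:ℝ) ^ 4) atTop (nhds 0) :=
        fun m hm => (tendsto_pow_div_pow_atTop_zero hm).comp tendsto_natCast_atTop_atTop
      fin_cases k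
      · simpa [hz, y15] using (tendsto_const_nhds (x := (1:ℝ))).add (hbase 0 (by norm_num))
      · simpa [hz, y15] using (tendsto_const_nhds (x := (1:ℝ))).add (hbase 1 (by norm_num))
      · simpa [hz, y15] using (tendsto_const_nhds (x := (1:ℝ))).add (hbase 2 (by norm_num))
      · simpa [hz, y15] using (tendsto_const_nhds (x := (1:ℝ))).add (hbase 3 (by norm_num))
      · have : ∀ᶠ n : ℕ in atTop, z n 4 = 2 := by
          filter_upwards [eventually_ge_atTop 1] with n hn
          have hn0 : ((n:ℝ)) ≠ 0 := by positivity
          have h4 : (((4:Fin 5)):ℕ) = 4 := rfl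
          simp only [hz, h4, div_self (pow_ne_zero 4 hn0)]
          norm_num
        have : Tendsto (fun n : ℕ => z n 4) atTop (nhds 2) :=
          Tendsto.congr' (this.mono fun n h => h.symm) tendsto_const_nhds
        simpa [y15] using this
    have : y15 ∈ momCone15 :=
      hcl.mem_of_tendsto htend ((eventually_ge_atTop 1).mono hmem)
    exact y15_notMem this
end

section
/- Let b ∈ ℝ^{ℕ⁴_3} be the truncated multi-sequence with b_0 = 1, all first and second moments equal to 1, and all third-order moments ∫x_i x_j x_k with i,j,k ≥ 1 equal to 3. Then b admits no representing Borel measure on ℝ⁴: any representing measure μ would satisfy ∫(1−x_1)² dμ = 0, forcing supp μ ⊆ {x_1 = 1}, yet ∫ x_1(1−x_1)² dμ = 2 ≠ 0, a contradiction. -/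
open MeasureTheory

/-- the tms `b ∈ ℝ^{ℕ⁴_3}` with `b_α = 3` for `|α| = 3` and `b_α = 1` for
`|α| ≤ 2` admits no representing Borel measure on `ℝ⁴`. -/
theorem stmt16 :
    ¬ ∃ μ : Measure (Fin 4 → ℝ),
      (∀ α : Fin 4 → ℕ, (∑ i, α i) ≤ 3 →
        Integrable (fun x : Fin 4 → ℝ => ∏ i, x i ^ α i) μ) ∧
      (∀ α : Fin 4 → ℕ, (∑ i, α i) ≤ 3 →
        (∫ x, ∏ i, x i ^ α i ∂μ) = if (∑ i, α i) = 3 then (3 : ℝ) else 1) := by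
  rintro ⟨μ, hint, hval⟩
  set p : ℕ → (Fin 4 → ℝ) → ℝ := fun k x => x 0 ^ k with hp
  have hmon : ∀ k : ℕ, (fun x : Fin 4 → ℝ =>
      ∏ i, x i ^ (fun i : Fin 4 => if i = 0 then k else 0) i) = p k := by
    intro k; funext x; simp [Fin.prod_univ_four, hp]
  have hsum : ∀ k : ℕ, (∑ i, (fun i : Fin 4 => if i = 0 then k else 0) i) = k := by
    intro k; simp [Fin.sum_univ_four]
  have hintk : ∀ k ≤ 3, Integrable (p k) μ := by
    intro k hk
    have := hint (fun i => if i = 0 then k else 0) (by rw [hsum]; exact hk)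
    rwa [hmon] at this
  have hvalk : ∀ k ≤ 3, (∫ x, p k x ∂μ) = if k = 3 then (3:ℝ) else 1 := by
    intro k hk
    have := hval (fun i => if i = 0 then k else 0) (by rw [hsum]; exact hk)
    rw [hmon] at this; rwa [hsum] at this
  have i0 := hintk 0 (by norm_num)
  have i1 := hintk 1 (by norm_num)
  have i2 := hintk 2 (by norm_num)
  have i3 := hintk 3 (by norm_num)
  have h0 := hvalk 0 (by norm_num)
  have h1 := hvalk 1 (by norm_num)
  have h2 := hvalk 2 (by norm_num)
  have h3 := hvalk 3 (by norm_num)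
  norm_num at h0 h1 h2 h3
  have hfeq : (fun x : Fin 4 → ℝ => (1 - x 0)^2)
      = fun x => (p 0 x - 2 * p 1 x) + p 2 x := by
    funext x; simp only [hp]; ring
  have hfint : Integrable (fun x : Fin 4 → ℝ => (1 - x 0)^2) μ := by
    rw [hfeq]; exact (i0.sub (i1.const_mul 2)).add i2
  have iB1 : Integrable (fun x : Fin 4 → ℝ => 2 * p 1 x) μ := i1.const_mul 2
  have iA : Integrable (fun x : Fin 4 → ℝ => p 0 x - 2 * p 1 x) μ := i0.sub iB1
  have iB2 : Integrable (fun x : Fin 4 → ℝ => 2 * p 2 x) μ := i2.const_mul 2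
  have iC : Integrable (fun x : Fin 4 → ℝ => p 1 x - 2 * p 2 x) μ := i1.sub iB2
  have hf : (∫ x, (1 - x 0)^2 ∂μ) = 0 := by
    rw [hfeq, integral_add iA i2, integral_sub i0 iB1, MeasureTheory.integral_const_mul, h0, h1, h2]
    ring
  have hae : (fun x : Fin 4 → ℝ => (1 - x 0)^2) =ᵐ[μ] 0 :=
    (integral_eq_zero_iff_of_nonneg (fun x => sq_nonneg _) hfint).mp hf
  have hgae : (fun x : Fin 4 → ℝ => x 0 * (1 - x 0)^2) =ᵐ[μ] 0 := by
    filter_upwards [hae] with x hx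
    simp only [Pi.zero_apply] at hx ⊢
    rw [hx]; ring
  have hg0 : (∫ x, x 0 * (1 - x 0)^2 ∂μ) = 0 := by
    rw [integral_congr_ae hgae]; simp
  have hgeq : (fun x : Fin 4 → ℝ => x 0 * (1 - x 0)^2)
      = fun x => (p 1 x - 2 * p 2 x) + p 3 x := by
    funext x; simp only [hp]; ring
  rw [hgeq, integral_add iC i3, integral_sub i1 iB2, MeasureTheory.integral_const_mul,
    h1, h2, h3] at hg0
  norm_num at hg0
end
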